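/- arXiv:1407.6426 — 2 statements merged into one kernel-verified Lean document; each statement's English description precedes it below -/
import Mathlib

section
/- Let f : ℝ≥0 → ℝ≥0 be continuous, increasing, and bounded, and suppose z̃ is a fixed point of f at which f is differentiable with f'(z̃) > 1. Then there exist fixed points z* > z̃ and z** < z̃ of f (assuming f(0) > 0). -/
/-!
Write `g x = f x - x`. Since `f'(z̃) > 1`, `g` is positive just to the right of `z̃` and negative
just to the left of it. Boundedness makes `g` nonpositive far to the right, and `f 0 > 0` makes
`g 0` positive, so the intermediate value theorem gives a zero of `g` on each side of `z̃`.
-/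

open Set Filter Topology Function

theorem IsFixedPt.eventually_nhdsGT_lt_apply {f : ℝ → ℝ} {f' a : ℝ} (hfix : IsFixedPt f a)
    (hf : HasDerivAt f f' a) (hslope : 1 < f') : ∀ᶠ x in 𝓝[>] a, x < f x := by
  have hev : ∀ᶠ x in 𝓝[>] a, 1 < slope f a x :=
    (hasDerivAt_iff_tendsto_slope.mp hf).eventually (eventually_gt_nhds hslope)
      |>.filter_mono (nhdsWithin_mono _ fun _ hx => ne_of_gt hx)
  filter_upwards [hev, self_mem_nhdsWithin] with x hx hax
  rw [slope_def_field, hfix.eq, one_lt_div (sub_pos.2 hax)] at hx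
  linarith

theorem IsFixedPt.eventually_nhdsLT_apply_lt {f : ℝ → ℝ} {f' a : ℝ} (hfix : IsFixedPt f a)
    (hf : HasDerivAt f f' a) (hslope : 1 < f') : ∀ᶠ x in 𝓝[<] a, f x < x := by
  have hev : ∀ᶠ x in 𝓝[<] a, 1 < slope f a x :=
    (hasDerivAt_iff_tendsto_slope.mp hf).eventually (eventually_gt_nhds hslope)
      |>.filter_mono (nhdsWithin_mono _ fun _ hx => ne_of_lt hx)
  filter_upwards [hev, self_mem_nhdsWithin] with x hx hxa
  rw [slope_def_field, hfix.eq, one_lt_div_of_neg (sub_neg.2 hxa)] at hx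
  linarith

theorem exists_isFixedPt_ge_of_le_apply {α : Type*} [ConditionallyCompleteLinearOrder α]
    [TopologicalSpace α] [OrderTopology α] [DenselyOrdered α] {f : α → α} {a M : α}
    (hc : ContinuousOn f (Ici a)) (hbdd : ∀ x ∈ Ici a, f x ≤ M) (ha : a ≤ f a) :
    ∃ z, a ≤ z ∧ IsFixedPt f z := by
  obtain ⟨z, hz, hfix⟩ := exists_mem_Icc_isFixedPt (hc.mono Icc_subset_Ici_self)
    (le_max_left a M) ha ((hbdd _ (le_max_left a M)).trans (le_max_right a M))
  exact ⟨z, hz.1, hfix⟩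

theorem unstable_fixed_point_flanked_by_fixed_points_general
    (f : ℝ → ℝ) (hc : ContinuousOn f (Set.Ici 0))
    (M : ℝ) (hbdd : ∀ x ∈ Set.Ici (0:ℝ), f x ≤ M)
    (h0 : 0 < f 0)
    (zt : ℝ) (hzt : zt ∈ Set.Ici (0:ℝ)) (hfix : f zt = zt)
    (f' : ℝ) (hderiv : HasDerivAt f f' zt) (hslope : 1 < f') :
    (∃ zs, zt < zs ∧ f zs = zs) ∧ (∃ zss, 0 ≤ zss ∧ zss < zt ∧ f zss = zss) := by
  have hzt_pos : 0 < zt := (eq_or_lt_of_le hzt).resolve_left fun h => by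
    rw [← h] at hfix; linarith
  constructor
  · obtain ⟨a, hfa, hza⟩ := ((IsFixedPt.eventually_nhdsGT_lt_apply hfix hderiv hslope).and
      self_mem_nhdsWithin).exists
    have ha0 : (0 : ℝ) ≤ a := hzt.trans hza.le
    obtain ⟨z, haz, hz⟩ := exists_isFixedPt_ge_of_le_apply (hc.mono (Ici_subset_Ici.2 ha0))
      (fun x hx => hbdd x (ha0.trans hx)) hfa.le
    exact ⟨z, hza.trans_le haz, hz⟩
  · obtain ⟨b, hfb, hb⟩ := ((IsFixedPt.eventually_nhdsLT_apply_lt hfix hderiv hslope).and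
      (Ioo_mem_nhdsLT hzt_pos)).exists
    obtain ⟨z, hz, hz_fix⟩ := exists_mem_Icc_isFixedPt (hc.mono Icc_subset_Ici_self)
      hb.1.le h0.le hfb.le
    exact ⟨z, hz.1, hz.2.trans_lt hb.2, hz_fix⟩

/-- if `f : [0,∞) → [0,∞)` is continuous, increasing and bounded,
with `f 0 > 0`, and `z̃` is a fixed point at which `f` is differentiable with
derivative greater than `1`, then `f` has fixed points `z* > z̃` and `z** < z̃`
(both in `[0,∞)`). -/
theorem unstable_fixed_point_flanked_by_fixed_points
    (f : ℝ → ℝ) (hc : ContinuousOn f (Set.Ici 0))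
    (hmono : MonotoneOn f (Set.Ici 0))
    (hmaps : Set.MapsTo f (Set.Ici 0) (Set.Ici 0))
    (M : ℝ) (hbdd : ∀ x ∈ Set.Ici (0:ℝ), f x ≤ M)
    (h0 : 0 < f 0)
    (zt : ℝ) (hzt : zt ∈ Set.Ici (0:ℝ)) (hfix : f zt = zt)
    (f' : ℝ) (hderiv : HasDerivAt f f' zt) (hslope : 1 < f') :
    (∃ zs, zt < zs ∧ f zs = zs) ∧ (∃ zss, 0 ≤ zss ∧ zss < zt ∧ f zss = zss) :=
  unstable_fixed_point_flanked_by_fixed_points_general f hc M hbdd h0 zt hzt hfix f' hderiv hslope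
end

section
/- Let A be a symmetric positive definite real matrix with nonpositive off-diagonal entries and suppose A is irreducible (the underlying graph of nonzero off-diagonal entries plus diagonal is connected). Then every entry of A⁻¹ is strictly positive. -/
/-!
Let `x` be a column of `A⁻¹`, so `A x = eⱼ ≥ 0`. Write `x = x⁺ - x⁻`. Since off-diagonal entries
of `A` are nonpositive and `x⁺ᵢ x⁻ᵢ = 0`, the cross term `x⁻ᵀ A x⁺` is `≤ 0`, hence
`0 ≤ x⁻ᵀ A x = x⁻ᵀ A x⁺ - x⁻ᵀ A x⁻ ≤ -x⁻ᵀ A x⁻`, and positive definiteness forces `x⁻ = 0`.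
If now `xᵢ = 0`, then `0 ≤ (A x)ᵢ = ∑_{k ≠ i} Aᵢₖ xₖ` is a sum of nonpositive terms, so `xₖ = 0`
whenever `Aᵢₖ ≠ 0`; by irreducibility `x = 0`, contradicting `A x = eⱼ`.
-/

open Matrix

namespace Matrix

variable {n : Type*} [Fintype n] {A : Matrix n n ℝ}

lemma negPart_dotProduct_mulVec_posPart_nonpos (hoffdiag : ∀ i j, i ≠ j → A i j ≤ 0)
    (x : n → ℝ) : x⁻ ⬝ᵥ A *ᵥ x⁺ ≤ 0 := by
  simp only [dotProduct, mulVec, Finset.mul_sum]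
  refine Finset.sum_nonpos fun i _ => Finset.sum_nonpos fun k _ => ?_
  rw [Pi.negPart_apply, Pi.posPart_apply, mul_left_comm]
  rcases eq_or_ne i k with rfl | hik
  · rcases le_total 0 (x i) with h | h
    · simp [negPart_eq_zero.mpr h]
    · simp [posPart_eq_zero.mpr h]
  · exact mul_nonpos_of_nonpos_of_nonneg (hoffdiag i k hik) (by positivity)

lemma nonneg_of_mulVec_nonneg (hpd : A.PosDef) (hoffdiag : ∀ i j, i ≠ j → A i j ≤ 0)
    {x : n → ℝ} (hAx : 0 ≤ A *ᵥ x) : 0 ≤ x := by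
  have hsplit : x⁻ ⬝ᵥ A *ᵥ x = x⁻ ⬝ᵥ A *ᵥ x⁺ - x⁻ ⬝ᵥ A *ᵥ x⁻ := by
    rw [← dotProduct_sub, ← mulVec_sub, posPart_sub_negPart]
  have hquad : x⁻ ⬝ᵥ A *ᵥ x⁻ ≤ 0 := by
    have := dotProduct_nonneg_of_nonneg (negPart_nonneg x) hAx
    linarith [negPart_dotProduct_mulVec_posPart_nonpos hoffdiag x]
  by_contra hx
  have hpos := hpd.dotProduct_mulVec_pos (mt negPart_eq_zero.mp hx)
  rw [star_trivial] at hpos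
  linarith

lemma eq_zero_of_mulVec_apply_nonneg (hoffdiag : ∀ i j, i ≠ j → A i j ≤ 0) {x : n → ℝ}
    (hx : 0 ≤ x) {i k : n} (hAx : 0 ≤ (A *ᵥ x) i) (hxi : x i = 0) (hAik : A i k ≠ 0) :
    x k = 0 := by
  have hterm : ∀ m ∈ Finset.univ, A i m * x m ≤ 0 := by
    intro m _
    rcases eq_or_ne i m with rfl | him
    · simp [hxi]
    · exact mul_nonpos_of_nonpos_of_nonneg (hoffdiag i m him) (hx m)
  have hsum : ∑ m, A i m * x m = 0 := le_antisymm (Finset.sum_nonpos hterm) hAx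
  exact (mul_eq_zero.mp ((Finset.sum_eq_zero_iff_of_nonpos hterm).mp hsum k
    (Finset.mem_univ k))).resolve_left hAik

lemma eq_zero_of_reflTransGen (hoffdiag : ∀ i j, i ≠ j → A i j ≤ 0) {x : n → ℝ}
    (hx : 0 ≤ x) (hAx : 0 ≤ A *ᵥ x) {a b : n}
    (hab : Relation.ReflTransGen (fun a b => a ≠ b ∧ A a b ≠ 0) a b) (hxa : x a = 0) :
    x b = 0 := by
  induction hab with
  | refl => exact hxa
  | tail _ hstep ih => exact eq_zero_of_mulVec_apply_nonneg hoffdiag hx (hAx _) ih hstep.2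

lemma pos_of_mulVec_nonneg_of_ne_zero (hpd : A.PosDef) (hoffdiag : ∀ i j, i ≠ j → A i j ≤ 0)
    (hirr : ∀ i j : n, Relation.ReflTransGen (fun a b => a ≠ b ∧ A a b ≠ 0) i j)
    {x : n → ℝ} (hAx : 0 ≤ A *ᵥ x) (hAx₀ : A *ᵥ x ≠ 0) (i : n) : 0 < x i := by
  have hx := nonneg_of_mulVec_nonneg hpd hoffdiag hAx
  refine (hx i).lt_of_ne' fun hxi => hAx₀ ?_
  have : x = 0 := funext fun k => eq_zero_of_reflTransGen hoffdiag hx hAx (hirr i k) hxi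
  rw [this, mulVec_zero]

end Matrix

theorem irreducible_M_matrix_inv_pos_general
    {n : Type*} [Fintype n] [DecidableEq n]
    (A : Matrix n n ℝ) (hpd : A.PosDef)
    (hoffdiag : ∀ i j, i ≠ j → A i j ≤ 0)
    (hirr : ∀ i j : n, Relation.ReflTransGen (fun a b => a ≠ b ∧ A a b ≠ 0) i j) :
    ∀ i j, 0 < A⁻¹ i j := by
  intro i j
  have hAinv : A * A⁻¹ = 1 := mul_nonsing_inv A (isUnit_iff_ne_zero.mpr hpd.det_pos.ne')
  have hcol : A *ᵥ (A⁻¹ *ᵥ Pi.single j 1) = Pi.single j 1 := by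
    rw [mulVec_mulVec, hAinv, one_mulVec]
  have hpos := pos_of_mulVec_nonneg_of_ne_zero hpd hoffdiag hirr (x := A⁻¹ *ᵥ Pi.single j 1)
    (by rw [hcol]; exact Pi.single_nonneg.mpr zero_le_one)
    (by rw [hcol]; exact Pi.single_ne_zero_iff.mpr one_ne_zero) i
  rwa [mulVec_single_one, col_apply] at hpos

/-- an irreducible symmetric positive definite matrix with
nonpositive off-diagonal entries (an irreducible symmetric M-matrix) has an
entrywise strictly positive inverse. Irreducibility is expressed by the
connectedness of the graph of nonzero off-diagonal entries. -/
theorem irreducible_M_matrix_inv_pos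
    {n : Type*} [Fintype n] [DecidableEq n]
    (A : Matrix n n ℝ) (hsymm : A.IsSymm) (hpd : A.PosDef)
    (hoffdiag : ∀ i j, i ≠ j → A i j ≤ 0)
    (hirr : ∀ i j : n, Relation.ReflTransGen (fun a b => a ≠ b ∧ A a b ≠ 0) i j) :
    ∀ i j, 0 < A⁻¹ i j :=
  irreducible_M_matrix_inv_pos_general A hpd hoffdiag hirr
end
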